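/- The Dinkelbach iteration is monotone: if x^(l) minimizes F(μ^(l), ·) over C and μ^(l+1) := (L̃ − t₀R_b(x^(l)))/R_a(x^(l)), then μ^(l+1) ≤ μ^(l) whenever F(μ^(l), x^(l)) ≤ 0, with equality only if μ^(l) = μ*. -/

import Mathlib

/-! Dividing by `g x₀ > 0` turns `f x₀ - μ g x₀ ≤ 0` into `f x₀ / g x₀ ≤ μ`. In the equality case
the minimum of `f - μ g` over `C` is `0`, so `μ ≤ f / g` on all of `C`, and `μ` is attained at `x₀`:
it is the least ratio. -/

theorem div_le_of_sub_mul_nonpos {a b μ : ℝ} (hb : 0 < b) (h : a - μ * b ≤ 0) : a / b ≤ μ := by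
  rw [div_le_iff₀ hb]
  linarith

theorem isLeast_image_div_of_isMinOn_sub_mul {E : Type*} {C : Set E} {f g : E → ℝ} {μ : ℝ}
    {x₀ : E} (hg : ∀ x ∈ C, 0 < g x) (hx₀ : x₀ ∈ C)
    (hmin : IsMinOn (fun x => f x - μ * g x) C x₀) (hratio : f x₀ / g x₀ = μ) :
    IsLeast ((fun x => f x / g x) '' C) μ := by
  have hzero : f x₀ - μ * g x₀ = 0 := by
    rw [← hratio, div_mul_cancel₀ _ (hg x₀ hx₀).ne', sub_self]
  refine ⟨⟨x₀, hx₀, hratio⟩, ?_⟩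
  rintro _ ⟨x, hx, rfl⟩
  have hnonneg : 0 ≤ f x - μ * g x := hzero ▸ hmin hx
  rw [le_div_iff₀ (hg x hx)]
  linarith

theorem stmt_8_general {E : Type*} (C : Set E)
    (Rb Ra : E → ℝ)
    (L t₀ : ℝ)
    (hRa : ∀ x ∈ C, 0 < Ra x)
    (μl : ℝ) (xl : E) (hxl : xl ∈ C)
    (hmin : IsMinOn (fun x => L - t₀ * Rb x - μl * Ra x) C xl)
    (hF : L - t₀ * Rb xl - μl * Ra xl ≤ 0) :
    (L - t₀ * Rb xl) / Ra xl ≤ μl ∧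
    ((L - t₀ * Rb xl) / Ra xl = μl →
      μl = sInf ((fun x => (L - t₀ * Rb x) / Ra x) '' C)) :=
  ⟨div_le_of_sub_mul_nonpos (hRa xl hxl) hF, fun heq =>
    (isLeast_image_div_of_isMinOn_sub_mul (f := fun x => L - t₀ * Rb x) hRa hxl hmin
      heq).csInf_eq.symm⟩

/-- Monotonicity of the Dinkelbach iteration: if xₗ minimizes F(μₗ,·) over C
and F(μₗ,xₗ) ≤ 0, then μₗ₊₁ := (L̃ − t₀R_b(xₗ))/R_a(xₗ) ≤ μₗ, with
equality only if μₗ equals the optimal ratio μ*. -/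
theorem stmt_8 {E : Type*} [TopologicalSpace E] (C : Set E)
    (hC : C.Nonempty) (hcomp : IsCompact C)
    (Rb Ra : E → ℝ) (hRbc : ContinuousOn Rb C) (hRac : ContinuousOn Ra C)
    (L t₀ : ℝ) (hL : 0 < L) (ht₀ : 0 ≤ t₀)
    (hRa : ∀ x ∈ C, 0 < Ra x) (hRb : ∀ x ∈ C, 0 < Rb x)
    (hnum : ∀ x ∈ C, 0 < L - t₀ * Rb x)
    (μl : ℝ) (xl : E) (hxl : xl ∈ C)
    (hmin : IsMinOn (fun x => L - t₀ * Rb x - μl * Ra x) C xl)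
    (hF : L - t₀ * Rb xl - μl * Ra xl ≤ 0) :
    (L - t₀ * Rb xl) / Ra xl ≤ μl ∧
    ((L - t₀ * Rb xl) / Ra xl = μl →
      μl = sInf ((fun x => (L - t₀ * Rb x) / Ra x) '' C)) :=
  stmt_8_general C Rb Ra L t₀ hRa μl xl hxl hmin hF
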